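/- Let X be a finite alphabet, ↢ ∉ X, L₁ = {w ∈ (X∪{↢})* : w^↩ = λ}, and let h be the substitution h(a) = L₁·a for a ∈ X. Then for every dictionary V ⊆ X*, one has (V^ω)≈ = h(V^ω) = (h(V))^ω; in particular if A ⊆ X^ω is an ω-power then A≈ is an ω-power. -/

import Mathlib

open Set

/-- Finite levels of the Borel hierarchy: index `n` corresponds to level `n+1`.
Index 0 gives (open, closed); index `n+1` gives (countable unions of level-`n` Π sets,
countable intersections of level-`n` Σ sets). -/
def sigmaPiAux (α : Type*) [TopologicalSpace α] : ℕ → (Set α → Prop) × (Set α → Prop)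
  | 0 => (fun s => IsOpen s, fun s => IsClosed s)
  | n + 1 =>
      (fun s => ∃ f : ℕ → Set α, (∀ i, (sigmaPiAux α n).2 (f i)) ∧ s = ⋃ i, f i,
       fun s => ∃ f : ℕ → Set α, (∀ i, (sigmaPiAux α n).1 (f i)) ∧ s = ⋂ i, f i)

/-- The class Σ⁰ₖ of the Borel hierarchy (for `k ≥ 1`). -/
def SigmaClass {α : Type*} [TopologicalSpace α] (k : ℕ) (s : Set α) : Prop :=
  (sigmaPiAux α (k - 1)).1 s

/-- The class Π⁰ₖ of the Borel hierarchy (for `k ≥ 1`). -/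
def PiClass {α : Type*} [TopologicalSpace α] (k : ℕ) (s : Set α) : Prop :=
  (sigmaPiAux α (k - 1)).2 s

/-- A finite word `l` is a prefix of the infinite word `x`. -/
def PrefixOf {α : Type*} (l : List α) (x : ℕ → α) : Prop :=
  ∀ (i : ℕ) (h : i < l.length), l.get ⟨i, h⟩ = x i

/-- The ω-power of a dictionary `V`: infinite concatenations of nonempty words of `V`. -/
def omegaPow {α : Type*} (V : Set (List α)) : Set (ℕ → α) :=
  {x | ∃ u : ℕ → List α, (∀ i, u i ∈ V ∧ u i ≠ []) ∧
        ∀ n, PrefixOf (((List.range n).map u).flatten) x}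

/-- Words over `X ∪ {b}` (with `b = none`) containing infinitely many letters of `X`. -/
def Zinf (X : Type*) : Set (ℕ → Option X) := {x | ∀ N, ∃ m, N ≤ m ∧ (x m).isSome}

/-- The map deleting every occurrence of the letter `b = none`. -/
noncomputable def phi {X : Type*} [Inhabited X] (x : ℕ → Option X) : ℕ → X :=
  fun n => (x (Nat.nth (fun m => (x m).isSome = true) n)).getD default

/-- `A^b = {x ∈ (X ∪ {b})^ω : x(/b) ∈ A}`. -/
def bPower {X : Type*} [Inhabited X] (A : Set (ℕ → X)) : Set (ℕ → Option X) :=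
  {x | x ∈ Zinf X ∧ phi x ∈ A}

/-- Wadge reducibility. -/
def WadgeLE {α β : Type*} [TopologicalSpace α] [TopologicalSpace β]
    (L : Set α) (L' : Set β) : Prop :=
  ∃ f : α → β, Continuous f ∧ L = f ⁻¹' L'

/-- Substitution extended to finite words. -/
def subWord {X Y : Type*} (f : X → Set (List Y)) : List X → Set (List Y)
  | [] => {[]}
  | a :: w => {l | ∃ u v, u ∈ f a ∧ v ∈ subWord f w ∧ l = u ++ v}

/-- Substitution extended to dictionaries. -/
def subLang {X Y : Type*} (f : X → Set (List Y)) (V : Set (List X)) : Set (List Y) :=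
  ⋃ w ∈ V, subWord f w

/-- Substitution extended to an infinite word. -/
def subOmega {X Y : Type*} (f : X → Set (List Y)) (x : ℕ → X) : Set (ℕ → Y) :=
  {y | ∃ u : ℕ → List Y, (∀ i, u i ∈ f (x i)) ∧
        ∀ n, PrefixOf (((List.range n).map u).flatten) y}

/-- Substitution extended to ω-languages. -/
def subOmegaImage {X Y : Type*} (f : X → Set (List Y)) (L : Set (ℕ → X)) : Set (ℕ → Y) :=
  ⋃ x ∈ L, subOmega f x



/-- Left-to-right evaluation of erasers (`none` = ↢), where an eraser with nothing to
erase is simply ignored. -/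
def evalT {X : Type*} (w : List (Option X)) : List X :=
  w.foldl (fun s c => match c with | some a => s ++ [a] | none => s.dropLast) []

/-- Left-to-right evaluation of erasers, undefined (`none` result) as soon as an eraser
has nothing to erase. -/
def evalH {X : Type*} (w : List (Option X)) : Option (List X) :=
  w.foldl (fun s? c => s?.bind fun s =>
      match c with
      | some a => some (s ++ [a])
      | none => match s with | [] => none | _ :: _ => some s.dropLast)
    (some [])

/-- The prefix of length `k` of the infinite word `x`. -/
def prefTake {X : Type*} (x : ℕ → X) (k : ℕ) : List X := (List.range k).map x

/-- `L∼ = {x : x^↢ ∈ L}`: the evaluations of the finite prefixes of `x` converge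
(in Duparc's sense of eventually stable prefixes) to an infinite word lying in `L`. -/
def Ltilde {X : Type*} (L : Set (ℕ → X)) : Set (ℕ → Option X) :=
  {x | ∃ y ∈ L, ∀ k, ∃ n, ∀ p, n ≤ p → (evalT (prefTake x p)).take k = prefTake y k}

/-- `L≈ = {x : x^↩ is defined and belongs to L}`: every finite prefix of `x` evaluates
without error and the evaluations converge to an infinite word lying in `L`. -/
def Lapprox {X : Type*} (L : Set (ℕ → X)) : Set (ℕ → Option X) :=
  {x | (∀ n, (evalH (prefTake x n)).isSome) ∧
       ∃ y ∈ L, ∀ k, ∃ n, ∀ p, n ≤ p →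
          ((evalH (prefTake x p)).getD []).take k = prefTake y k}
/-- `L₁ = {w ∈ (X ∪ {↢})* : w^↩ = λ}`. -/
def L1 (X : Type*) : Set (List (Option X)) := {w | evalH w = some ([] : List X)}

/-- The substitution `h(a) = L₁·a`. -/
def hsub (X : Type*) : X → Set (List (Option X)) :=
  fun a => {l | ∃ w ∈ L1 X, l = w ++ [some a]}

/-!
Reading `x` letter by letter, `w ↦ w^↩` is a stack machine. If the stacks converge to `y`, let
`b k` be the first time from which the stack always begins with `y 0 ⋯ y (k - 1)`. The stack at
time `b k` is exactly this word and was reached by pushing `y (k - 1)`; so between `b k` and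
`b (k + 1) - 1` the machine never touches `y 0 ⋯ y (k - 1)` and returns to it, i.e. that factor
of `x` lies in `L₁`, and the factor up to `b (k + 1)` lies in `L₁ · y k`. Conversely, while
reading `L₁ · y n` the stack never drops below `y 0 ⋯ y (n - 1)`. Hence `L≈ = h(L)` for every
`L`, and `h(V^ω) = (h(V))^ω` holds for every substitution whose images avoid the empty word.
-/

section InfiniteWords

variable {α : Type*}

def IsConcat (B : ℕ → List α) (x : ℕ → α) : Prop :=
  ∀ n, PrefixOf (((List.range n).map B).flatten) x

def blockOffset (B : ℕ → List α) (n : ℕ) : ℕ := (((List.range n).map B).flatten).length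

def slice (x : ℕ → α) (i j : ℕ) : List α := (List.range' i (j - i)).map x

lemma prefTake_succ (x : ℕ → α) (n : ℕ) : prefTake x (n + 1) = prefTake x n ++ [x n] := by
  simp [prefTake, List.range_succ]

lemma length_prefTake (x : ℕ → α) (n : ℕ) : (prefTake x n).length = n := by
  simp [prefTake]

lemma prefTake_take (x : ℕ → α) {k n : ℕ} (h : k ≤ n) :
    (prefTake x n).take k = prefTake x k := by
  simp [prefTake, ← List.map_take, List.take_range, Nat.min_eq_left h]

lemma prefixOf_iff {l : List α} {x : ℕ → α} : PrefixOf l x ↔ prefTake x l.length = l := by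
  refine ⟨fun h => List.ext_getElem (length_prefTake x _) fun i _ hi => ?_, fun h i hi => ?_⟩
  · simp only [prefTake, List.getElem_map, List.getElem_range]
    exact (h i hi).symm
  · revert hi
    rw [← h]
    simp [prefTake]

lemma PrefixOf.of_prefix {l l' : List α} {x : ℕ → α} (h : PrefixOf l x) (h' : l' <+: l) :
    PrefixOf l' x := fun i hi => by
  rw [← h i (lt_of_lt_of_le hi h'.length_le)]
  simp [h'.getElem hi]

lemma prefixOf_prefTake (x : ℕ → α) (n : ℕ) : PrefixOf (prefTake x n) x := by
  rw [prefixOf_iff, length_prefTake]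

lemma slice_zero_left (x : ℕ → α) (n : ℕ) : slice x 0 n = prefTake x n := by
  simp [slice, prefTake, List.range_eq_range']

lemma length_slice (x : ℕ → α) (i j : ℕ) : (slice x i j).length = j - i := by
  simp [slice]

lemma getElem_slice (x : ℕ → α) {i j k : ℕ} (hk : k < (slice x i j).length) :
    (slice x i j)[k] = x (i + k) := by
  simp [slice]

lemma slice_append {x : ℕ → α} {i j k : ℕ} (hij : i ≤ j) (hjk : j ≤ k) :
    slice x i j ++ slice x j k = slice x i k := by
  obtain ⟨m, rfl⟩ := Nat.exists_eq_add_of_le hij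
  obtain ⟨n, rfl⟩ := Nat.exists_eq_add_of_le hjk
  simp only [slice, ← List.map_append, show i + m - i = m by omega,
    show i + m + n - (i + m) = n by omega, show i + m + n - i = m + n by omega,
    List.range'_append_1]

lemma slice_succ {x : ℕ → α} {i j : ℕ} (hij : i ≤ j) :
    slice x i (j + 1) = slice x i j ++ [x j] := by
  rw [← slice_append hij j.le_succ]
  simp [slice]

lemma flatten_map_slice {x : ℕ → α} {b : ℕ → ℕ} (hb : Monotone b) (m : ℕ) :
    ((List.range m).map fun k => slice x (b k) (b (k + 1))).flatten = slice x (b 0) (b m) := by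
  induction m with
  | zero => simp [slice]
  | succ m ih =>
    rw [List.range_succ, List.map_append, List.flatten_append, ih]
    simpa using slice_append (hb (Nat.zero_le m)) (hb m.le_succ)

variable (B : ℕ → List α)

lemma flatten_range_succ (n : ℕ) :
    ((List.range (n + 1)).map B).flatten = ((List.range n).map B).flatten ++ B n := by
  simp [List.range_succ]

lemma flatten_range_prefix {m n : ℕ} (h : m ≤ n) :
    ((List.range m).map B).flatten <+: ((List.range n).map B).flatten := by
  obtain ⟨k, rfl⟩ := Nat.exists_eq_add_of_le h
  rw [List.range_add, List.map_append, List.flatten_append]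
  exact List.prefix_append _ _

lemma blockOffset_succ (n : ℕ) : blockOffset B (n + 1) = blockOffset B n + (B n).length := by
  simp [blockOffset, flatten_range_succ]

lemma blockOffset_mono : Monotone (blockOffset B) :=
  fun _ _ h => (flatten_range_prefix B h).length_le

lemma blockOffset_congr {β : Type*} {C : ℕ → List β} (h : ∀ n, (B n).length = (C n).length)
    (n : ℕ) : blockOffset B n = blockOffset C n := by
  simp [blockOffset, List.length_flatten, Function.comp_def, h]

variable {B}

lemma le_blockOffset (hB : ∀ n, B n ≠ []) (n : ℕ) : n ≤ blockOffset B n := by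
  induction n with
  | zero => exact Nat.zero_le _
  | succ n ih =>
    have := List.length_pos_iff.2 (hB n)
    rw [blockOffset_succ]
    omega

lemma exists_eq_blockOffset_add (hB : ∀ n, B n ≠ []) (p : ℕ) :
    ∃ n j, j < (B n).length ∧ p = blockOffset B n + j := by
  induction p with
  | zero => exact ⟨0, 0, List.length_pos_iff.2 (hB 0), rfl⟩
  | succ p ih =>
    obtain ⟨n, j, hj, rfl⟩ := ih
    by_cases hj' : j + 1 < (B n).length
    · exact ⟨n, j + 1, hj', rfl⟩
    · refine ⟨n + 1, 0, List.length_pos_iff.2 (hB (n + 1)), ?_⟩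
      rw [blockOffset_succ]
      omega

lemma exists_isConcat (hB : ∀ n, B n ≠ []) : ∃ x, IsConcat B x := by
  have hlt : ∀ i, i < blockOffset B (i + 1) := fun i => le_blockOffset hB (i + 1)
  refine ⟨fun i => (((List.range (i + 1)).map B).flatten)[i]'(hlt i), fun n i hi => ?_⟩
  rcases le_total (i + 1) n with h | h
  · exact ((flatten_range_prefix B h).getElem (hlt i)).symm
  · exact (flatten_range_prefix B h).getElem hi

lemma IsConcat.prefTake_blockOffset {x : ℕ → α} (hx : IsConcat B x) (n : ℕ) :
    prefTake x (blockOffset B n) = ((List.range n).map B).flatten :=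
  prefixOf_iff.1 (hx n)

lemma IsConcat.prefTake_blockOffset_add {x : ℕ → α} (hx : IsConcat B x) {n r : ℕ}
    (hr : r ≤ (B n).length) :
    prefTake x (blockOffset B n + r) = ((List.range n).map B).flatten ++ (B n).take r := by
  have hn := hx.prefTake_blockOffset (n + 1)
  rw [flatten_range_succ] at hn
  rw [← prefTake_take x (show blockOffset B n + r ≤ blockOffset B (n + 1) by
    rw [blockOffset_succ]; omega), hn]
  exact List.take_length_add_append r

lemma IsConcat.apply_blockOffset_add {x : ℕ → α} (hx : IsConcat B x) {n j : ℕ}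
    (hj : j < (B n).length) : x (blockOffset B n + j) = (B n)[j] := by
  have h := hx.prefTake_blockOffset_add (show j + 1 ≤ (B n).length from hj)
  rw [← Nat.add_assoc, prefTake_succ, hx.prefTake_blockOffset_add hj.le, List.take_add_one,
    List.getElem?_eq_getElem hj, ← List.append_assoc] at h
  simpa using (List.append_inj' h rfl).2

end InfiniteWords

section Substitution

variable {X Y : Type*} {f : X → Set (List Y)}

lemma mem_subWord_iff {w : List X} {l : List Y} :
    l ∈ subWord f w ↔ ∃ q, List.Forall₂ (fun a u => u ∈ f a) w q ∧ l = q.flatten := by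
  induction w generalizing l with
  | nil => simp [subWord]
  | cons a w ih =>
    simp only [subWord, Set.mem_ofPred_eq, ih, List.forall₂_cons_left_iff]
    constructor
    · rintro ⟨u, _, hu, ⟨q, hq, rfl⟩, rfl⟩
      exact ⟨u :: q, ⟨u, q, hu, hq, rfl⟩, rfl⟩
    · rintro ⟨_, ⟨u, q, hu, hq, rfl⟩, rfl⟩
      exact ⟨u, _, hu, ⟨q, hq, rfl⟩, rfl⟩

lemma mem_subOmegaImage {L : Set (ℕ → X)} {z : ℕ → Y} :
    z ∈ subOmegaImage f L ↔ ∃ x ∈ L, ∃ v, (∀ i, v i ∈ f (x i)) ∧ IsConcat v z := by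
  simp [subOmegaImage, subOmega, IsConcat]

lemma mem_omegaPow {V : Set (List X)} {x : ℕ → X} :
    x ∈ omegaPow V ↔ ∃ u, (∀ i, u i ∈ V ∧ u i ≠ []) ∧ IsConcat u x :=
  Iff.rfl

lemma subOmegaImage_omegaPow_subset (hf : ∀ a, [] ∉ f a) (V : Set (List X)) :
    subOmegaImage f (omegaPow V) ⊆ omegaPow (subLang f V) := by
  intro z hz
  obtain ⟨x, hx, v, hv, hvz⟩ := mem_subOmegaImage.1 hz
  obtain ⟨u, hu, hux⟩ := mem_omegaPow.1 hx
  set pieces : ℕ → List (List Y) := fun n => slice v (blockOffset u n) (blockOffset u (n + 1))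
  have hpieces : ∀ n, List.Forall₂ (fun a l => l ∈ f a) (u n) (pieces n) := fun n =>
    List.forall₂_iff_get.2 ⟨by simp [pieces, length_slice, blockOffset_succ], fun j hj _ => by
      simp only [pieces, List.get_eq_getElem, getElem_slice, ← hux.apply_blockOffset_add hj]
      exact hv _⟩
  refine ⟨fun n => (pieces n).flatten, fun n => ⟨?_, ?_⟩, fun m => ?_⟩
  · simp only [subLang, Set.mem_iUnion]
    exact ⟨u n, (hu n).1, mem_subWord_iff.2 ⟨_, hpieces n, rfl⟩⟩
  · have hu0 : 0 < (u n).length := List.length_pos_iff.2 (hu n).2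
    have hp0 : 0 < (pieces n).length := (hpieces n).length_eq ▸ hu0
    have hmem : (pieces n)[0] ∈ f (u n)[0] := (hpieces n).get hu0 hp0
    intro h
    exact hf _ (List.flatten_eq_nil_iff.1 h _ (List.getElem_mem hp0) ▸ hmem)
  · have hflat : ((List.range m).map pieces).flatten = prefTake v (blockOffset u m) :=
      (flatten_map_slice (blockOffset_mono u) m).trans (slice_zero_left v _)
    rw [show (List.range m).map (fun n => (pieces n).flatten)
        = ((List.range m).map pieces).map List.flatten by simp, ← List.flatten_flatten, hflat]
    exact hvz (blockOffset u m)

lemma omegaPow_subLang_subset (V : Set (List X)) :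
    omegaPow (subLang f V) ⊆ subOmegaImage f (omegaPow V) := by
  rintro z ⟨g, hg, hgz⟩
  have hdecomp :
      ∀ n, ∃ w ∈ V, ∃ q, List.Forall₂ (fun a l => l ∈ f a) w q ∧ g n = q.flatten :=
    fun n => by simpa [subLang, mem_subWord_iff] using (hg n).1
  choose w hwV q hwq hgq using hdecomp
  have hqne : ∀ n, q n ≠ [] := fun n h => (hg n).2 (by simp [hgq, h])
  have hwne : ∀ n, w n ≠ [] := fun n h => hqne n (List.forall₂_nil_left_iff.1 (h ▸ hwq n))
  obtain ⟨x, hx⟩ := exists_isConcat hwne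
  obtain ⟨v, hv⟩ := exists_isConcat hqne
  refine mem_subOmegaImage.2
    ⟨x, ⟨w, fun n => ⟨hwV n, hwne n⟩, hx⟩, v, fun i => ?_, fun m => ?_⟩
  · obtain ⟨n, j, hj, rfl⟩ := exists_eq_blockOffset_add hwne i
    have hj' : j < (q n).length := (hwq n).length_eq ▸ hj
    rw [hx.apply_blockOffset_add hj, blockOffset_congr w (fun n => (hwq n).length_eq),
      hv.apply_blockOffset_add hj']
    exact (hwq n).get hj hj'
  · have hflat : (prefTake v (blockOffset q m)).flatten = ((List.range m).map g).flatten := by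
      rw [hv.prefTake_blockOffset, List.flatten_flatten, List.map_map]
      simp only [Function.comp_def, ← hgq]
    refine PrefixOf.of_prefix ?_ (flatten_range_prefix v (le_blockOffset hqne m))
    exact hflat ▸ hgz m

theorem subOmegaImage_omegaPow (hf : ∀ a, [] ∉ f a) (V : Set (List X)) :
    subOmegaImage f (omegaPow V) = omegaPow (subLang f V) :=
  (subOmegaImage_omegaPow_subset hf V).antisymm (omegaPow_subLang_subset V)

end Substitution

section Erasers

variable {X : Type*}

def eraseStep (s : List X) : Option X → Option (List X)
  | some a => some (s ++ [a])
  | none => match s with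
    | [] => none
    | _ :: _ => some s.dropLast

lemma foldl_bind_eraseStep (w : List (Option X)) (s? : Option (List X)) :
    w.foldl (fun s? c => s?.bind (eraseStep · c)) s? = s?.bind (w.foldlM eraseStep ·) := by
  induction w generalizing s? with
  | nil => cases s? <;> rfl
  | cons c w ih => cases s? <;> simp [ih, List.foldlM_cons]

lemma evalH_eq_foldlM (w : List (Option X)) : evalH w = w.foldlM eraseStep [] :=
  foldl_bind_eraseStep w (some [])

lemma evalH_append (w w' : List (Option X)) :
    evalH (w ++ w') = (evalH w).bind (w'.foldlM eraseStep ·) := by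
  simp [evalH_eq_foldlM, List.foldlM_append]

lemma evalH_take_isSome {w : List (Option X)} (h : (evalH w).isSome) (n : ℕ) :
    (evalH (w.take n)).isSome := by
  rw [← List.take_append_drop n w, evalH_append] at h
  cases hn : evalH (w.take n) <;> simp_all

lemma eraseStep_none_of_ne_nil {s : List X} (h : s ≠ []) :
    eraseStep s none = some s.dropLast := by
  cases s
  · contradiction
  · rfl

lemma eraseStep_append_stack_iff {s t t' : List X} {c : Option X} :
    eraseStep (s ++ t) c = some (s ++ t') ↔ eraseStep t c = some t' := by
  cases c with
  | some a => simp [eraseStep, eq_comm]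
  | none =>
    rcases eq_or_ne t [] with rfl | ht
    · refine iff_of_false ?_ (by simp [eraseStep])
      rcases eq_or_ne s [] with rfl | hs
      · simp [eraseStep]
      · rw [List.append_nil, eraseStep_none_of_ne_nil hs]
        intro h
        have := congrArg List.length (Option.some.inj h)
        simp only [List.length_dropLast, List.length_append] at this
        have := List.length_pos_iff.2 hs
        omega
    · rw [eraseStep_none_of_ne_nil (by simp [ht]), eraseStep_none_of_ne_nil ht,
        List.dropLast_append_of_ne_nil ht]
      simp

lemma foldlM_eraseStep_append_stack {s t r : List X} {w : List (Option X)}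
    (h : w.foldlM eraseStep t = some r) : w.foldlM eraseStep (s ++ t) = some (s ++ r) := by
  induction w generalizing t with
  | nil => simp_all
  | cons c w ih =>
    rw [List.foldlM_cons] at h ⊢
    cases ht : eraseStep t c with
    | none => simp [ht] at h
    | some t' =>
      rw [ht] at h
      rw [eraseStep_append_stack_iff.2 ht]
      exact ih h

lemma foldlM_eraseStep_of_evalH {w : List (Option X)} {r : List X} (h : evalH w = some r)
    (s : List X) : w.foldlM eraseStep s = some (s ++ r) := by
  rw [evalH_eq_foldlM] at h
  simpa using foldlM_eraseStep_append_stack (s := s) h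

lemma exists_push_of_prefix_eraseStep {t t' l : List X} {c : Option X}
    (h : eraseStep t c = some t') (hl : l <+: t') (hnl : ¬ l <+: t) :
    ∃ a, c = some a ∧ t' = t ++ [a] ∧ t' = l := by
  cases c with
  | none =>
    rcases t with _ | ⟨b, t⟩
    · simp [eraseStep] at h
    · rw [eraseStep_none_of_ne_nil (List.cons_ne_nil b t), Option.some.injEq] at h
      exact absurd (hl.trans (h ▸ List.dropLast_prefix _)) hnl
  | some a =>
    rw [eraseStep, Option.some.injEq] at h
    subst h
    exact ⟨a, rfl, rfl, (List.prefix_concat_iff.1 hl).resolve_right hnl |>.symm⟩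

section Run

variable {S : ℕ → List X} {c : ℕ → Option X}

lemma foldlM_eraseStep_slice_drop (hstep : ∀ p, eraseStep (S p) (c p) = some (S (p + 1)))
    {s : List X} {i j : ℕ} (hij : i ≤ j)
    (hs : ∀ p, i ≤ p → p ≤ j → s <+: S p) :
    (slice c i j).foldlM eraseStep ((S i).drop s.length) = some ((S j).drop s.length) := by
  induction j, hij using Nat.le_induction with
  | base => simp [slice]
  | succ j hij ih =>
    rw [slice_succ hij, List.foldlM_append, ih fun p hp hpj => hs p hp (by omega)]
    obtain ⟨t, ht⟩ := hs j hij (by omega)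
    obtain ⟨t', ht'⟩ := hs (j + 1) (by omega) le_rfl
    have := hstep j
    rw [← ht, ← ht'] at this
    simpa [← ht, ← ht'] using eraseStep_append_stack_iff.1 this

lemma exists_stabilization_times (hstep : ∀ p, eraseStep (S p) (c p) = some (S (p + 1)))
    {y : ℕ → X} (hS0 : S 0 = [])
    (hconv : ∀ k, ∃ n, ∀ p, n ≤ p → prefTake y k <+: S p) :
    ∃ b : ℕ → ℕ, b 0 = 0 ∧ StrictMono b ∧
      (∀ k p, b k ≤ p → prefTake y k <+: S p) ∧ (∀ k, S (b k) = prefTake y k) ∧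
      ∀ k, ∃ p, b (k + 1) = p + 1 ∧ c p = some (y k) ∧ S p = prefTake y k := by
  classical
  let b k := Nat.find (hconv k)
  have hb : ∀ k p, b k ≤ p → prefTake y k <+: S p := fun k => Nat.find_spec (hconv k)
  have hpush : ∀ k p, b k = p + 1 →
      ∃ a, c p = some a ∧ S (p + 1) = S p ++ [a] ∧ S (p + 1) = prefTake y k := by
    intro k p hp
    refine exists_push_of_prefix_eraseStep (hstep p) (hb k _ hp.le) fun h =>
      Nat.find_min (hconv k) (show p < b k by omega) fun q hq => ?_
    rcases hq.eq_or_lt with rfl | hq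
    · exact h
    · exact hb k q (by omega)
  have hstate : ∀ k, S (b k) = prefTake y k := by
    intro k
    rcases hbk : b k with _ | p
    · have := hb k 0 hbk.le
      rw [hS0, List.prefix_nil] at this
      rw [hS0, this]
    · obtain ⟨a, -, -, h⟩ := hpush k p hbk
      exact h
  have hlt : ∀ k, b k < b (k + 1) := by
    intro k
    refine lt_of_le_of_ne (Nat.find_mono fun n hn p hp => ?_) fun h => ?_
    · exact (prefTake_succ y k ▸ List.prefix_append _ _).trans (hn p hp)
    · have := congrArg List.length ((hstate k).symm.trans (h ▸ hstate (k + 1)))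
      simp [length_prefTake] at this
  refine ⟨b, (Nat.find_eq_zero _).2 fun p _ => by simp [prefTake], strictMono_nat_of_lt_succ hlt,
    hb, hstate, fun k => ?_⟩
  obtain ⟨p, hp⟩ := Nat.exists_eq_add_one.2 (lt_of_le_of_lt (Nat.zero_le _) (hlt k))
  obtain ⟨a, hc, hSp, hy⟩ := hpush (k + 1) p hp
  rw [hSp, prefTake_succ] at hy
  obtain ⟨h1, h2⟩ := List.append_inj' hy rfl
  exact ⟨p, hp, by rw [hc, List.singleton_inj.1 h2], h1⟩

end Run

end Erasers

section Approx

variable {X : Type*}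

lemma nil_notMem_hsub (a : X) : [] ∉ hsub X a := by
  rintro ⟨w, -, h⟩
  simp at h

lemma evalH_flatten_of_mem_hsub {v : ℕ → List (Option X)} {y : ℕ → X}
    (hv : ∀ i, v i ∈ hsub X (y i)) (n : ℕ) :
    evalH ((List.range n).map v).flatten = some (prefTake y n) := by
  induction n with
  | zero => rfl
  | succ n ih =>
    obtain ⟨w, hw, hvn⟩ := hv n
    rw [flatten_range_succ, evalH_append, ih, hvn, prefTake_succ]
    simp [List.foldlM_append, foldlM_eraseStep_of_evalH hw, eraseStep]

lemma subOmegaImage_hsub_subset_Lapprox (L : Set (ℕ → X)) :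
    subOmegaImage (hsub X) L ⊆ Lapprox L := by
  intro x hx
  obtain ⟨y, hyL, v, hv, hvx⟩ := mem_subOmegaImage.1 hx
  have hvne : ∀ n, v n ≠ [] := fun n h => nil_notMem_hsub _ (h ▸ hv n)
  have hstack : ∀ n j, j < (v n).length →
      ∃ t, evalH (prefTake x (blockOffset v n + j)) = some (prefTake y n ++ t) := by
    intro n j hj
    obtain ⟨w, hw, hvn⟩ := hv n
    have hjw : j ≤ w.length := by
      rw [hvn, List.length_append, List.length_singleton] at hj
      omega
    obtain ⟨t, ht⟩ :=
      Option.isSome_iff_exists.1 (evalH_take_isSome (w := w) (by simp [hw.out]) j)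
    refine ⟨t, ?_⟩
    rw [hvx.prefTake_blockOffset_add hj.le, evalH_append, evalH_flatten_of_mem_hsub hv, hvn,
      List.take_append_of_le_length hjw]
    exact foldlM_eraseStep_of_evalH ht _
  refine ⟨fun p => ?_, y, hyL, fun k => ⟨blockOffset v k, fun p hp => ?_⟩⟩
  · obtain ⟨n, j, hj, rfl⟩ := exists_eq_blockOffset_add hvne p
    obtain ⟨t, ht⟩ := hstack n j hj
    simp [ht]
  · obtain ⟨n, j, hj, rfl⟩ := exists_eq_blockOffset_add hvne p
    obtain ⟨t, ht⟩ := hstack n j hj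
    have hkn : k ≤ n := by
      by_contra! h
      have := blockOffset_mono v (show n + 1 ≤ k by omega)
      rw [blockOffset_succ] at this
      omega
    rw [ht, Option.getD_some, List.take_append_of_le_length (by simp [length_prefTake, hkn]),
      prefTake_take y hkn]

lemma Lapprox_subset_subOmegaImage_hsub (L : Set (ℕ → X)) :
    Lapprox L ⊆ subOmegaImage (hsub X) L := by
  rintro x ⟨hdef, y, hyL, hconv⟩
  set S : ℕ → List X := fun p => (evalH (prefTake x p)).getD []
  have hS : ∀ p, evalH (prefTake x p) = some (S p) := fun p => by
    obtain ⟨s, hs⟩ := Option.isSome_iff_exists.1 (hdef p)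
    simp [S, hs]
  have hstep : ∀ p, eraseStep (S p) (x p) = some (S (p + 1)) := fun p => by
    have := hS (p + 1)
    rw [prefTake_succ, evalH_append, hS p] at this
    simpa using this
  have hpref : ∀ k, ∃ n, ∀ p, n ≤ p → prefTake y k <+: S p := fun k => by
    obtain ⟨n, hn⟩ := hconv k
    exact ⟨n, fun p hp => List.prefix_iff_eq_take.2 (by rw [length_prefTake, hn p hp])⟩
  obtain ⟨b, hb0, hbmono, hbpref, hbstate, hbpush⟩ := exists_stabilization_times hstep rfl hpref
  refine mem_subOmegaImage.2
    ⟨y, hyL, fun k => slice x (b k) (b (k + 1)), fun k => ?_, fun m => ?_⟩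
  · obtain ⟨p, hp, hxp, hSp⟩ := hbpush k
    have hbp : b k ≤ p := by
      have := hbmono (Nat.lt_add_one k)
      omega
    have hL1 : slice x (b k) p ∈ L1 X := by
      have := foldlM_eraseStep_slice_drop hstep hbp fun q hq _ => hbpref k q hq
      simpa [L1, evalH_eq_foldlM, hbstate, hSp, List.drop_eq_nil_of_le, length_prefTake]
        using this
    exact ⟨_, hL1, show slice x (b k) (b (k + 1)) = _ by rw [hp, slice_succ hbp, hxp]⟩
  · rw [flatten_map_slice hbmono.monotone, hb0, slice_zero_left]
    exact prefixOf_prefTake x (b m)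

theorem Lapprox_eq_subOmegaImage_hsub (L : Set (ℕ → X)) :
    Lapprox L = subOmegaImage (hsub X) L :=
  (Lapprox_subset_subOmegaImage_hsub L).antisymm (subOmegaImage_hsub_subset_Lapprox L)

end Approx

theorem Lapprox_omegaPow_general {X : Type} (V : Set (List X)) :
    Lapprox (omegaPow V) = subOmegaImage (hsub X) (omegaPow V) ∧
    subOmegaImage (hsub X) (omegaPow V) = omegaPow (subLang (hsub X) V) :=
  ⟨Lapprox_eq_subOmegaImage_hsub _, subOmegaImage_omegaPow nil_notMem_hsub V⟩

/-- `(V^ω)≈ = h(V^ω) = (h(V))^ω`; in particular `A≈` is an ω-power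
whenever `A` is. -/
theorem Lapprox_omegaPow {X : Type} [Fintype X] (V : Set (List X)) :
    Lapprox (omegaPow V) = subOmegaImage (hsub X) (omegaPow V) ∧
    subOmegaImage (hsub X) (omegaPow V) = omegaPow (subLang (hsub X) V) :=
  Lapprox_omegaPow_general V
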